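/- Let m ≥ 2, n = 8m⁴ + 8m³ + 12m² + 4m, and let X be the circulant graph X(Z_n; {±1, ±(4m³+4m²+6m+1), ±(4m⁴+4m²−4m), ±(4m⁴+4m²−2m)}) (the largest known circulant graph of degree 8 and diameter k = 2m). Then for every l with m + 1 ≤ l ≤ 2m, the number of vertices of X at graph distance exactly l from the vertex 0 is strictly less than (8l³ + 16l)/3; i.e., every level l > ⌊(k+1)/2⌋ is submaximal in the sense of the Abelian Cayley bound. -/

import Mathlib

/-!
A vertex at distance `l` from `0` is `∑ xᵢ gᵢ` for some `x` on the ℓ¹-sphere of radius `l` in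
`ℤ⁴`: a geodesic walk records how often each `±gᵢ` is used, and it cannot be shortened. That
sphere has exactly `(8l³ + 16l)/3` points. For `l ≥ m + 1` the distinct points
`(1 - m, l - m - 1, -1, 1)` and `(m + 1, l - m - 1, 0, 0)` of the sphere give the same vertex,
because their difference `(-2m, 0, -1, 1)` is an integer relation among the generators.
-/

/-- The circulant graph `X(Z_n; {±g 0, …, ±g (f-1)})`: vertices are `ZMod n`, and distinct
`u, v` are adjacent iff `v - u ≡ ±g i (mod n)` for some `i`. -/
def circulant (n : ℕ) {f : ℕ} (g : Fin f → ℤ) : SimpleGraph (ZMod n) where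
  Adj u v := u ≠ v ∧ ∃ i, v - u = (g i : ZMod n) ∨ u - v = (g i : ZMod n)
  symm := by
    constructor
    rintro u v ⟨hne, i, h | h⟩
    · exact ⟨hne.symm, i, Or.inr h⟩
    · exact ⟨hne.symm, i, Or.inl h⟩
  loopless := by constructor; rintro u ⟨hne, -⟩; exact hne rfl

open Finset

theorem sum_Icc_neg_natAbs {M : Type*} [AddCommMonoid M] (G : ℕ → M) (l : ℕ) :
    ∑ a ∈ Icc (-(l : ℤ)) l, G a.natAbs = G 0 + 2 • ∑ t ∈ range l, G (t + 1) := by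
  induction l with
  | zero => simp
  | succ l ih =>
    have hIcc : Icc (-((l + 1 : ℕ) : ℤ)) (l + 1 : ℕ) =
        insert (-(l + 1 : ℤ)) (insert (l + 1 : ℤ) (Icc (-(l : ℤ)) l)) := by
      ext a; simp only [mem_Icc, mem_insert]; omega
    rw [hIcc, sum_insert (by simp only [mem_insert, mem_Icc]; omega), sum_insert (by simp), ih,
      sum_range_succ]
    simp only [show (-(l + 1 : ℤ)).natAbs = l + 1 by omega,
      show ((l : ℤ) + 1).natAbs = l + 1 by omega]
    abel

noncomputable def l1Sphere (d l : ℕ) : Finset (Fin d → ℤ) :=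
  (Fintype.piFinset fun _ => Icc (-(l : ℤ)) l).filter fun x => ∑ i, (x i).natAbs = l

namespace l1Sphere

theorem mem {d l : ℕ} {x : Fin d → ℤ} : x ∈ l1Sphere d l ↔ ∑ i, (x i).natAbs = l := by
  refine ⟨fun h => (mem_filter.mp h).2, fun h => mem_filter.mpr ⟨?_, h⟩⟩
  refine Fintype.mem_piFinset.mpr fun i => mem_Icc.mpr ?_
  have : (x i).natAbs ≤ l :=
    h ▸ single_le_sum (f := fun j => (x j).natAbs) (fun j _ => Nat.zero_le _) (mem_univ i)
  omega

theorem card_radius_zero (d : ℕ) : #(l1Sphere d 0) = 1 := by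
  rw [card_eq_one]
  exact ⟨0, eq_singleton_iff_unique_mem.mpr ⟨mem.mpr (by simp), fun x hx => by
    have := mem.mp hx
    simp only [sum_eq_zero_iff, mem_univ, true_imp_iff, Int.natAbs_eq_zero] at this
    exact funext this⟩⟩

theorem card_dim_zero (l : ℕ) : #(l1Sphere 0 (l + 1)) = 0 := by
  simp [l1Sphere]

theorem card_succ_dim (d l : ℕ) :
    #(l1Sphere (d + 1) l) = #(l1Sphere d l) + 2 * ∑ j ∈ range l, #(l1Sphere d j) := by
  have hfib : #(l1Sphere (d + 1) l) =
      ∑ a ∈ Icc (-(l : ℤ)) l, #(l1Sphere d (l - a.natAbs)) := by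
    rw [← card_sigma]
    refine card_nbij' (fun x => ⟨x 0, Fin.tail x⟩) (fun p => Fin.cons p.1 p.2) ?_ ?_ ?_ ?_
    · intro x hx
      have hx := Fin.sum_univ_succ (fun i => (x i).natAbs) ▸ mem.mp hx
      simp only [coe_sigma, Set.mem_sigma_iff, mem_coe, mem_Icc, mem, Fin.tail]
      omega
    · rintro ⟨a, y⟩ hy
      simp only [coe_sigma, Set.mem_sigma_iff, mem_coe, mem_Icc, mem] at hy
      simp only [mem_coe, mem, Fin.sum_univ_succ, Fin.cons_zero, Fin.cons_succ]
      omega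
    · intro x _
      exact Fin.cons_self_tail x
    · rintro ⟨a, y⟩ _
      simp
  rw [hfib, sum_Icc_neg_natAbs (fun t => #(l1Sphere d (l - t))), ← sum_range_reflect,
    smul_eq_mul]
  congr 2
  exact sum_congr rfl fun t ht => by rw [mem_range] at ht; congr 2; omega

theorem card_succ_succ (d l : ℕ) : #(l1Sphere (d + 1) (l + 1)) =
    #(l1Sphere (d + 1) l) + #(l1Sphere d (l + 1)) + #(l1Sphere d l) := by
  rw [card_succ_dim, card_succ_dim, sum_range_succ]
  ring

theorem card_one (l : ℕ) : #(l1Sphere 1 (l + 1)) = 2 := by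
  induction l with
  | zero => simp only [card_succ_succ, card_radius_zero, card_dim_zero]
  | succ l ih => simp only [card_succ_succ, ih, card_dim_zero]

theorem card_two (l : ℕ) : #(l1Sphere 2 (l + 1)) = 4 * (l + 1) := by
  induction l with
  | zero => rw [card_succ_succ, card_radius_zero, card_radius_zero, card_one]
  | succ l ih => rw [card_succ_succ, ih, card_one, card_one]; ring

theorem card_three (l : ℕ) : #(l1Sphere 3 (l + 1)) = 4 * (l + 1) ^ 2 + 2 := by
  induction l with
  | zero => rw [card_succ_succ, card_radius_zero, card_radius_zero, card_two]; rfl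
  | succ l ih => rw [card_succ_succ, ih, card_two, card_two]; ring

theorem three_mul_card_four (l : ℕ) :
    3 * #(l1Sphere 4 (l + 1)) = 8 * (l + 1) ^ 3 + 16 * (l + 1) := by
  induction l with
  | zero => rw [card_succ_succ, card_radius_zero, card_radius_zero, card_three]; rfl
  | succ l ih => rw [card_succ_succ, mul_add, mul_add, ih, card_three, card_three]; ring

end l1Sphere

namespace circulant

open SimpleGraph

variable {n f : ℕ} {g : Fin f → ℤ}

theorem exists_walk_add_gen (u : ZMod n) (i : Fin f) :
    ∃ p : (circulant n g).Walk u (u + g i), p.length ≤ 1 := by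
  by_cases h : (g i : ZMod n) = 0
  · exact ⟨Walk.nil.copy rfl (by rw [h, add_zero]), by simp⟩
  · have hadj : (circulant n g).Adj u (u + g i) := ⟨by simpa using h, i, Or.inl (by ring)⟩
    exact ⟨hadj.toWalk, by simp⟩

theorem exists_walk_sub_gen (u : ZMod n) (i : Fin f) :
    ∃ p : (circulant n g).Walk u (u - g i), p.length ≤ 1 := by
  obtain ⟨p, hp⟩ := exists_walk_add_gen (g := g) (u - (g i : ZMod n)) i
  exact ⟨p.reverse.copy (sub_add_cancel _ _) rfl, by simpa using hp⟩

theorem exists_walk_add_mul_gen (u : ZMod n) (i : Fin f) (k : ℤ) :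
    ∃ p : (circulant n g).Walk u (u + (k * g i : ℤ)), p.length ≤ k.natAbs := by
  induction k using Int.induction_on with
  | zero => exact ⟨Walk.nil.copy rfl (by simp), by simp⟩
  | succ k ih =>
    obtain ⟨p, hp⟩ := ih
    obtain ⟨q, hq⟩ := exists_walk_add_gen (g := g) (u + ((k * g i : ℤ) : ZMod n)) i
    refine ⟨(p.append q).copy rfl (by push_cast; ring), ?_⟩
    simp only [Walk.length_copy, Walk.length_append]
    omega
  | pred k ih =>
    obtain ⟨p, hp⟩ := ih
    obtain ⟨q, hq⟩ := exists_walk_sub_gen (g := g) (u + ((-k * g i : ℤ) : ZMod n)) i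
    refine ⟨(p.append q).copy rfl (by push_cast; ring), ?_⟩
    simp only [Walk.length_copy, Walk.length_append]
    omega

theorem exists_walk_sum (x : Fin f → ℤ) :
    ∃ p : (circulant n g).Walk 0 (∑ i, x i * g i : ℤ), p.length ≤ ∑ i, (x i).natAbs := by
  suffices ∀ s : Finset (Fin f), ∃ p : (circulant n g).Walk 0 (∑ i ∈ s, x i * g i : ℤ),
      p.length ≤ ∑ i ∈ s, (x i).natAbs from this univ
  intro s
  induction s using Finset.induction_on with
  | empty =>
    exact ⟨Walk.nil.copy rfl (by simp), by rw [Walk.length_copy]; simp⟩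
  | insert j s hj ih =>
    obtain ⟨p, hp⟩ := ih
    obtain ⟨q, hq⟩ := exists_walk_add_mul_gen (g := g) _ j (x j)
    refine ⟨(p.append q).copy rfl (by rw [sum_insert hj]; push_cast; ring), ?_⟩
    simp only [Walk.length_copy, Walk.length_append, sum_insert hj]
    omega

theorem dist_zero_sum_le (x : Fin f → ℤ) :
    (circulant n g).dist 0 (∑ i, x i * g i : ℤ) ≤ ∑ i, (x i).natAbs :=
  let ⟨p, hp⟩ := exists_walk_sum (n := n) (g := g) x
  (SimpleGraph.dist_le p).trans hp

theorem Adj.exists_sum_eq {u w : ZMod n} (h : (circulant n g).Adj u w) :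
    ∃ y : Fin f → ℤ, ∑ i, (y i).natAbs ≤ 1 ∧ w - u = ((∑ i, y i * g i : ℤ) : ZMod n) := by
  obtain ⟨-, i, hi | hi⟩ := h
  · exact ⟨Pi.single i 1, by simp [Pi.single_apply, apply_ite Int.natAbs],
      by simp [Pi.single_apply, hi]⟩
  · exact ⟨Pi.single i (-1), by simp [Pi.single_apply, apply_ite Int.natAbs],
      by simp [Pi.single_apply, ← hi]⟩

theorem exists_sum_eq_of_walk {u v : ZMod n} (p : (circulant n g).Walk u v) :
    ∃ x : Fin f → ℤ, ∑ i, (x i).natAbs ≤ p.length ∧ v - u = ((∑ i, x i * g i : ℤ) : ZMod n) := by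
  induction p with
  | nil => exact ⟨0, by simp⟩
  | cons h q ih =>
    obtain ⟨x, hxq, hx⟩ := ih
    obtain ⟨y, hy1, hy⟩ := Adj.exists_sum_eq h
    refine ⟨x + y, ?_, ?_⟩
    · calc ∑ i, ((x + y) i).natAbs ≤ ∑ i, ((x i).natAbs + (y i).natAbs) :=
            sum_le_sum fun i _ => Int.natAbs_add_le _ _
        _ ≤ q.length + 1 := by rw [sum_add_distrib]; omega
        _ = _ := (Walk.length_cons _ _).symm
    · simp only [Pi.add_apply, add_mul, sum_add_distrib, Int.cast_add, ← hx, ← hy]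
      ring

theorem exists_mem_l1Sphere_of_dist_eq {v : ZMod n} {l : ℕ}
    (hv : (circulant n g).dist 0 v = l) (hl : l ≠ 0) :
    ∃ x ∈ l1Sphere f l, ((∑ i, x i * g i : ℤ) : ZMod n) = v := by
  obtain ⟨p, hp⟩ := exists_walk_of_dist_ne_zero (hv ▸ hl)
  obtain ⟨x, hxp, hx⟩ := exists_sum_eq_of_walk p
  rw [sub_zero] at hx
  have hle := hx ▸ dist_zero_sum_le (n := n) (g := g) x
  exact ⟨x, l1Sphere.mem.mpr (by omega), hx.symm⟩

theorem ncard_dist_eq_lt {l : ℕ} (hl : l ≠ 0) {x y : Fin f → ℤ} (hx : x ∈ l1Sphere f l)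
    (hy : y ∈ l1Sphere f l) (hxy : x ≠ y)
    (hxyg : ((∑ i, x i * g i : ℤ) : ZMod n) = ((∑ i, y i * g i : ℤ) : ZMod n)) :
    {v | (circulant n g).dist 0 v = l}.ncard < #(l1Sphere f l) := by
  set φ : (Fin f → ℤ) → ZMod n := fun x => ((∑ i, x i * g i : ℤ) : ZMod n)
  calc {v | (circulant n g).dist 0 v = l}.ncard ≤ #((l1Sphere f l).image φ) := by
        rw [← Set.ncard_coe_finset]
        refine Set.ncard_le_ncard (fun v hv => ?_) (finite_toSet _)
        obtain ⟨z, hz, rfl⟩ := exists_mem_l1Sphere_of_dist_eq hv hl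
        exact mem_coe.mpr (mem_image_of_mem φ hz)
    _ < #(l1Sphere f l) :=
        card_image_le.lt_of_ne fun h => hxy (injOn_of_card_image_eq h hx hy hxyg)

end circulant

theorem stmt5_general (m : ℕ) (hm : 2 ≤ m) (l : ℕ) (hl1 : m+1 ≤ l) :
    {v : ZMod (8*m^4+8*m^3+12*m^2+4*m) |
      (circulant (8*m^4+8*m^3+12*m^2+4*m)
        ![(1 : ℤ), 4*(m : ℤ)^3+4*m^2+6*m+1,
          4*(m : ℤ)^4+4*m^2-4*m, 4*(m : ℤ)^4+4*m^2-2*m]).dist 0 v = l}.ncard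
      < (8*l^3+16*l)/3 := by
  obtain ⟨k, rfl⟩ : ∃ k, l = k + 1 := ⟨l - 1, by omega⟩
  rw [← l1Sphere.three_mul_card_four k, Nat.mul_div_cancel_left _ three_pos]
  refine circulant.ncard_dist_eq_lt k.succ_ne_zero (x := ![1 - m, k - m, -1, 1])
    (y := ![m + 1, k - m, 0, 0]) ?_ ?_ (by simp) ?_
  all_goals simp only [l1Sphere.mem, Fin.sum_univ_four, Matrix.cons_val_zero,
    Matrix.cons_val_one, Matrix.cons_val]
  · omega
  · omega
  · congr 1; ring

/-- For the largest known circulant graph of degree 8 and diameter `k = 2m` (order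
`n = 8m⁴+8m³+12m²+4m`, generators `1`, `4m³+4m²+6m+1`, `4m⁴+4m²−4m`, `4m⁴+4m²−2m`),
every distance partition level `l` with `m+1 ≤ l ≤ 2m` is submaximal: it has strictly
fewer than `(8l³+16l)/3 = LM_AC(8, l)` vertices. -/
theorem stmt5 (m : ℕ) (hm : 2 ≤ m) (l : ℕ) (hl1 : m+1 ≤ l) (hl2 : l ≤ 2*m) :
    {v : ZMod (8*m^4+8*m^3+12*m^2+4*m) |
      (circulant (8*m^4+8*m^3+12*m^2+4*m)
        ![(1 : ℤ), 4*(m : ℤ)^3+4*m^2+6*m+1,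
          4*(m : ℤ)^4+4*m^2-4*m, 4*(m : ℤ)^4+4*m^2-2*m]).dist 0 v = l}.ncard
      < (8*l^3+16*l)/3 :=
  stmt5_general m hm l hl1
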